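/- Define the level of a long root α by L(α) = ht^∨(α̃) − ht^∨(α) if α > 0, and L(α) = ht^∨(α̃) − ht^∨(α) − 1 if α < 0. If x ∈ W satisfies x(β) = α for long roots α, β, then l(x) ≥ |L(α) − L(β)|. -/

import Mathlib

open scoped RealInnerProductSpace

variable {V : Type*} [NormedAddCommGroup V] [InnerProductSpace ℝ V]

/-- An irreducible reduced (crystallographic) root system in a real inner product space. -/
structure IsIrredRootSystem (Φ : Set V) : Prop where
  finite : Φ.Finite
  nonempty : Φ.Nonempty
  nonzero : (0 : V) ∉ Φ
  spanning : Submodule.span ℝ Φ = ⊤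
  reflect_mem : ∀ α ∈ Φ, ∀ β ∈ Φ, β - (2 * ⟪α, β⟫ / ⟪α, α⟫) • α ∈ Φ
  crystallographic : ∀ α ∈ Φ, ∀ β ∈ Φ, ∃ n : ℤ, 2 * ⟪α, β⟫ / ⟪α, α⟫ = (n : ℝ)
  reduced : ∀ α ∈ Φ, ∀ t : ℝ, t • α ∈ Φ → t = 1 ∨ t = -1
  irreducible : ∀ Φ₁ Φ₂ : Set V, Φ₁ ∪ Φ₂ = Φ →
    (∀ α ∈ Φ₁, ∀ β ∈ Φ₂, ⟪α, β⟫ = 0) → Φ₁ = ∅ ∨ Φ₂ = ∅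

/-- `Δ` is a base (system of simple roots) for `Φ`: it is contained in `Φ`, linearly
independent, and every root is an integral combination of `Δ` with coefficients all of
the same sign. -/
def IsBase (Φ : Set V) (Δ : Finset V) : Prop :=
  (Δ : Set V) ⊆ Φ ∧ LinearIndependent ℝ (fun a : Δ => (a : V)) ∧
    ∀ γ ∈ Φ, ∃ c : V → ℤ, γ = ∑ α ∈ Δ, (c α : ℝ) • α ∧
      ((∀ α ∈ Δ, 0 ≤ c α) ∨ (∀ α ∈ Δ, c α ≤ 0))

/-- The positive roots with respect to the base `Δ`. -/
def posRoots (Φ : Set V) (Δ : Finset V) : Set V :=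
  {γ ∈ Φ | ∃ c : V → ℕ, γ = ∑ α ∈ Δ, (c α : ℝ) • α}

/-- The coroot `γ^∨ = 2γ/(γ|γ)` of a root `γ`. -/
noncomputable def coroot (γ : V) : V := (2 / ⟪γ, γ⟫) • γ

/-- The set of reflections in the roots of `Φ`, as linear automorphisms of `V`. -/
def reflections (Φ : Set V) : Set (V ≃ₗ[ℝ] V) :=
  {w | ∃ α ∈ Φ, ∀ v, w v = v - (2 * ⟪α, v⟫ / ⟪α, α⟫) • α}

/-- The Weyl group of `Φ`: the group generated by the reflections in the roots. -/
def weylGroup (Φ : Set V) : Subgroup (V ≃ₗ[ℝ] V) := Subgroup.closure (reflections Φ)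

/-- The simple reflections with respect to the base `Δ`. -/
def simpleReflections (Δ : Finset V) : Set (V ≃ₗ[ℝ] V) :=
  {w | ∃ α ∈ Δ, ∀ v, w v = v - (2 * ⟪α, v⟫ / ⟪α, α⟫) • α}

/-- The length of `w` with respect to the simple reflections determined by `Δ`. -/
noncomputable def len (Δ : Finset V) (w : V ≃ₗ[ℝ] V) : ℕ :=
  sInf {n | ∃ L : List (V ≃ₗ[ℝ] V),
    (∀ s ∈ L, s ∈ simpleReflections Δ) ∧ L.length = n ∧ L.prod = w}

/-- `t` is the highest root of `Φ` with respect to the base `Δ`. -/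
def IsHighestRoot (Φ : Set V) (Δ : Finset V) (t : V) : Prop :=
  t ∈ Φ ∧ ∀ α ∈ Φ, ∃ c : V → ℕ, t - α = ∑ a ∈ Δ, (c a : ℝ) • a

/-! Since the Weyl group is generated by simple reflections (conjugate `s_β` down to a simple
reflection by induction on the height of `β`), `x` is a product of `len x` simple reflections,
and it suffices that each simple reflection `s_γ` changes the level of a long root `β` by at
most one. The coroot height changes by the Cartan integer `⟨γ, β^∨⟩`, which lies in `{-1, 0, 1}`
for `β ≠ ±γ`, while the sign of `β` is kept; for `β = ±γ` the change `±2` of the height is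
offset by the change of sign. -/

/-- Mathlib's orthogonal reflection in the hyperplane `γᗮ` (the identity for `γ = 0`). -/
noncomputable def rootReflection (γ : V) : V ≃ₗ[ℝ] V :=
  (Submodule.reflection (ℝ ∙ γ)ᗮ).toLinearEquiv

lemma rootReflection_apply (γ v : V) :
    rootReflection γ v = v - (2 * ⟪γ, v⟫ / ⟪γ, γ⟫) • γ := by
  simp only [rootReflection, LinearIsometryEquiv.coe_toLinearEquiv,
    Submodule.reflection_orthogonal_apply, Submodule.reflection_singleton_apply,
    real_inner_self_eq_norm_sq]
  module

lemma rootReflection_apply_eq_sub_inner_smul_coroot (γ v : V) :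
    rootReflection γ v = v - ⟪γ, v⟫ • coroot γ := by
  rw [rootReflection_apply, coroot, smul_smul]
  congr 2
  ring

lemma rootReflection_rootReflection (γ v : V) : rootReflection γ (rootReflection γ v) = v :=
  Submodule.reflection_reflection _ v

lemma rootReflection_mul_self (γ : V) : rootReflection γ * rootReflection γ = 1 :=
  LinearEquiv.ext (rootReflection_rootReflection γ)

lemma rootReflection_inv (γ : V) : (rootReflection γ)⁻¹ = rootReflection γ :=
  inv_eq_of_mul_eq_one_right (rootReflection_mul_self γ)

lemma inner_rootReflection_rootReflection (γ u v : V) :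
    ⟪rootReflection γ u, rootReflection γ v⟫ = ⟪u, v⟫ :=
  LinearIsometryEquiv.inner_map_map _ u v

lemma inner_rootReflection_left (γ u v : V) :
    ⟪rootReflection γ u, v⟫ = ⟪u, rootReflection γ v⟫ := by
  rw [← inner_rootReflection_rootReflection γ u, rootReflection_rootReflection]

lemma rootReflection_self (γ : V) : rootReflection γ γ = -γ :=
  Submodule.reflection_orthogonalComplement_singleton_eq_neg γ

lemma rootReflection_neg (γ : V) : rootReflection (-γ) = rootReflection γ := by
  ext v
  simp only [rootReflection_apply, inner_neg_left, inner_neg_right, mul_neg, neg_div, neg_smul,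
    smul_neg, neg_neg]

lemma inner_coroot_self {γ : V} (hγ : γ ≠ 0) : ⟪γ, coroot γ⟫ = 2 := by
  rw [coroot, real_inner_smul_right, div_mul_cancel₀ _ (inner_self_ne_zero.mpr hγ)]

lemma coroot_neg (v : V) : coroot (-v) = -coroot v := by
  simp only [coroot, inner_neg_neg, smul_neg]

lemma coroot_rootReflection (γ v : V) :
    coroot (rootReflection γ v) = rootReflection γ (coroot v) := by
  rw [coroot, coroot, map_smul, inner_rootReflection_rootReflection]

lemma rootReflection_rootReflection_eq_conj (γ β : V) :
    rootReflection (rootReflection γ β) =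
      rootReflection γ * rootReflection β * rootReflection γ := by
  ext v
  simp only [LinearEquiv.mul_apply, rootReflection_apply β, map_sub, map_smul,
    rootReflection_rootReflection, ← inner_rootReflection_left,
    rootReflection_apply (rootReflection γ β) v]

lemma simpleReflections_eq_image (Δ : Finset V) :
    simpleReflections Δ = rootReflection '' (Δ : Set V) := by
  ext w
  simp only [simpleReflections, Set.mem_ofPred_eq, Set.mem_image, Finset.mem_coe,
    LinearEquiv.ext_iff, rootReflection_apply, eq_comm (a := w _)]

lemma reflections_eq_image (Φ : Set V) : reflections Φ = rootReflection '' Φ := by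
  ext w
  simp only [reflections, Set.mem_ofPred_eq, Set.mem_image,
    LinearEquiv.ext_iff, rootReflection_apply, eq_comm (a := w _)]

lemma simpleReflections_inv (Δ : Finset V) : (simpleReflections Δ)⁻¹ = simpleReflections Δ := by
  ext w
  simp only [Set.mem_inv, simpleReflections_eq_image, Set.mem_image]
  refine exists_congr fun γ => and_congr_right fun _ => ?_
  nth_rw 1 [← rootReflection_inv, inv_inj]

lemma mem_posRoots_of_nonneg {Φ : Set V} {Δ : Finset V} {β : V} (hβ : β ∈ Φ) {c : V → ℤ}
    (hc : β = ∑ a ∈ Δ, (c a : ℝ) • a) (hnonneg : ∀ a ∈ Δ, 0 ≤ c a) : β ∈ posRoots Φ Δ := by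
  refine ⟨hβ, fun a => (c a).toNat, hc.trans (Finset.sum_congr rfl fun a ha => ?_)⟩
  rw [← Int.toNat_of_nonneg (hnonneg a ha)]
  rfl

namespace IsIrredRootSystem

variable {Φ : Set V}

lemma ne_zero (hΦ : IsIrredRootSystem Φ) {β : V} (hβ : β ∈ Φ) : β ≠ 0 :=
  fun h => hΦ.nonzero (h ▸ hβ)

lemma rootReflection_mem (hΦ : IsIrredRootSystem Φ) {γ β : V} (hγ : γ ∈ Φ) (hβ : β ∈ Φ) :
    rootReflection γ β ∈ Φ := by
  rw [rootReflection_apply]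
  exact hΦ.reflect_mem γ hγ β hβ

lemma neg_mem (hΦ : IsIrredRootSystem Φ) {β : V} (hβ : β ∈ Φ) : -β ∈ Φ :=
  rootReflection_self β ▸ hΦ.rootReflection_mem hβ hβ

lemma abs_inner_lt_norm_mul_norm (hΦ : IsIrredRootSystem Φ) {γ β : V} (hγ : γ ∈ Φ)
    (hβ : β ∈ Φ) (h₁ : γ ≠ β) (h₂ : γ ≠ -β) : |⟪γ, β⟫| < ‖γ‖ * ‖β‖ := by
  refine (abs_real_inner_le_norm γ β).lt_of_ne fun h => ?_
  rw [← Real.norm_eq_abs, norm_inner_eq_norm_iff (hΦ.ne_zero hγ) (hΦ.ne_zero hβ)] at h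
  obtain ⟨c, -, rfl⟩ := h
  rcases hΦ.reduced γ hγ c hβ with rfl | rfl
  · exact h₁ (one_smul ℝ γ).symm
  · exact h₂ (by rw [neg_one_smul, neg_neg])

/-- Strict Cauchy–Schwarz and `‖γ‖ ≤ ‖β‖` give `|⟨γ, β^∨⟩| < 2`. -/
lemma abs_inner_coroot_le_one (hΦ : IsIrredRootSystem Φ) {r : ℝ}
    (hr : IsGreatest {x : ℝ | ∃ α ∈ Φ, x = ⟪α, α⟫} r) {γ β : V} (hγ : γ ∈ Φ) (hβ : β ∈ Φ)
    (hβr : ⟪β, β⟫ = r) (h₁ : γ ≠ β) (h₂ : γ ≠ -β) : |⟪γ, coroot β⟫| ≤ 1 := by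
  obtain ⟨n, hn⟩ := hΦ.crystallographic β hβ γ hγ
  have hcartan : ⟪γ, coroot β⟫ = n := by
    rw [coroot, real_inner_smul_right, ← hn, real_inner_comm γ β]
    ring
  have hβpos : 0 < ‖β‖ := norm_pos_iff.mpr (hΦ.ne_zero hβ)
  have hγβ : ‖γ‖ ≤ ‖β‖ := by
    have : ⟪γ, γ⟫ ≤ ⟪β, β⟫ := hβr ▸ hr.2 ⟨γ, hγ, rfl⟩
    rw [real_inner_self_eq_norm_sq, real_inner_self_eq_norm_sq] at this
    exact (pow_le_pow_iff_left₀ (norm_nonneg γ) (norm_nonneg β) two_ne_zero).mp this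
  have hlt : |(n : ℝ)| < 2 := by
    rw [← hcartan, coroot, real_inner_smul_right, abs_mul, real_inner_self_eq_norm_sq,
      abs_of_pos (by positivity), div_mul_eq_mul_div, div_lt_iff₀ (by positivity)]
    calc 2 * |⟪γ, β⟫| < 2 * (‖γ‖ * ‖β‖) := by
          gcongr; exact hΦ.abs_inner_lt_norm_mul_norm hγ hβ h₁ h₂
      _ ≤ 2 * ‖β‖ ^ 2 := by nlinarith
  rw [hcartan]
  rw [← Int.cast_abs] at hlt ⊢
  exact_mod_cast Int.lt_add_one_iff.mp (by exact_mod_cast hlt)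

end IsIrredRootSystem

namespace IsBase

variable {Φ : Set V} {Δ : Finset V}

lemma coeff_eq_of_sum_smul_eq (hΔ : IsBase Φ Δ) {c d : V → ℝ}
    (h : ∑ a ∈ Δ, c a • a = ∑ a ∈ Δ, d a • a) {a : V} (ha : a ∈ Δ) : c a = d a := by
  have hli : LinearIndepOn ℝ id (Δ : Set V) := hΔ.2.1
  refine sub_eq_zero.mp (linearIndepOn_finset_iff.mp hli (c - d) ?_ a ha)
  simp only [Pi.sub_apply, sub_smul, Finset.sum_sub_distrib, id, h, sub_self]

open Classical in
lemma coeff_eq_of_sum_smul_sub_eq (hΔ : IsBase Φ Δ) {γ : V} (hγ : γ ∈ Δ) {c d : V → ℝ}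
    {n : ℝ} (h : ∑ a ∈ Δ, c a • a - n • γ = ∑ a ∈ Δ, d a • a) :
    ∀ a ∈ Δ, d a = c a - if a = γ then n else 0 := by
  refine fun a ha =>
    hΔ.coeff_eq_of_sum_smul_eq (d := fun a => c a - if a = γ then n else 0) ?_ ha
  simp [← h, sub_smul, Finset.sum_sub_distrib, ite_smul, hγ]

lemma mem_posRoots_or_neg_mem (hΦ : IsIrredRootSystem Φ) (hΔ : IsBase Φ Δ) {β : V}
    (hβ : β ∈ Φ) : β ∈ posRoots Φ Δ ∨ -β ∈ posRoots Φ Δ := by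
  obtain ⟨c, hc, hnonneg | hnonpos⟩ := hΔ.2.2 β hβ
  · exact Or.inl (mem_posRoots_of_nonneg hβ hc hnonneg)
  · refine Or.inr (mem_posRoots_of_nonneg (c := -c) (hΦ.neg_mem hβ) ?_ ?_)
    · simp [hc, ← Finset.sum_neg_distrib]
    · exact fun a ha => neg_nonneg.mpr (hnonpos a ha)

lemma neg_notMem_posRoots (hΦ : IsIrredRootSystem Φ) (hΔ : IsBase Φ Δ) {β : V}
    (hβ : β ∈ posRoots Φ Δ) : -β ∉ posRoots Φ Δ := by
  rintro ⟨-, d, hd⟩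
  obtain ⟨hβΦ, c, hc⟩ := hβ
  have hcd : ∀ a ∈ Δ, (c a : ℝ) + d a = 0 := fun a ha =>
    hΔ.coeff_eq_of_sum_smul_eq (c := fun a => c a + d a) (d := 0) (by
      simp only [add_smul, Finset.sum_add_distrib, ← hc, ← hd, Pi.zero_apply, zero_smul,
        Finset.sum_const_zero, add_neg_cancel]) ha
  refine hΦ.ne_zero hβΦ (hc.trans (Finset.sum_eq_zero fun a ha => ?_))
  have : (c a : ℝ) = 0 := by
    linarith [hcd a ha, (c a).cast_nonneg (α := ℝ), (d a).cast_nonneg (α := ℝ)]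
  rw [this, zero_smul]

lemma mem_posRoots_of_mem (hΔ : IsBase Φ Δ) {γ : V} (hγ : γ ∈ Δ) : γ ∈ posRoots Φ Δ := by
  classical
  exact ⟨hΔ.1 hγ, fun a => if a = γ then 1 else 0, by simp [ite_smul, hγ]⟩

lemma rootReflection_mem_posRoots (hΦ : IsIrredRootSystem Φ) (hΔ : IsBase Φ Δ) {γ β : V}
    (hγ : γ ∈ Δ) (hβ : β ∈ posRoots Φ Δ) (hne : β ≠ γ) : rootReflection γ β ∈ posRoots Φ Δ := by
  obtain ⟨hβΦ, c, hc⟩ := hβ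
  obtain ⟨n, hn⟩ := hΦ.crystallographic γ (hΔ.1 hγ) β hβΦ
  refine (hΔ.mem_posRoots_or_neg_mem hΦ (hΦ.rootReflection_mem (hΔ.1 hγ) hβΦ)).resolve_right ?_
  rintro ⟨-, d, hd⟩
  have hcoeff := hΔ.coeff_eq_of_sum_smul_sub_eq hγ (c := fun a => c a) (d := fun a => -(d a : ℝ))
    (n := n) (by
      rw [← hc, ← hn, ← rootReflection_apply]
      simp only [neg_smul, Finset.sum_neg_distrib, ← hd, neg_neg])
  have hβγ : β = (c γ : ℝ) • γ := by
    refine hc.trans (Finset.sum_eq_single_of_mem γ hγ fun a ha haγ => ?_)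
    have hca := hcoeff a ha
    rw [if_neg haγ, sub_zero] at hca
    have : (c a : ℝ) = 0 := by linarith [(c a).cast_nonneg (α := ℝ), (d a).cast_nonneg (α := ℝ)]
    rw [this, zero_smul]
  rcases hΦ.reduced γ (hΔ.1 hγ) (c γ) (hβγ ▸ hβΦ) with h | h
  · exact hne (by rw [hβγ, h, one_smul])
  · linarith [(c γ).cast_nonneg (α := ℝ)]

lemma rootReflection_mem_posRoots_iff (hΦ : IsIrredRootSystem Φ) (hΔ : IsBase Φ Δ) {γ β : V}
    (hγ : γ ∈ Δ) (hβ : β ∈ Φ) (h₁ : β ≠ γ) (h₂ : β ≠ -γ) :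
    rootReflection γ β ∈ posRoots Φ Δ ↔ β ∈ posRoots Φ Δ := by
  refine ⟨fun hpos => ?_, fun hpos => hΔ.rootReflection_mem_posRoots hΦ hγ hpos h₁⟩
  refine (hΔ.mem_posRoots_or_neg_mem hΦ hβ).resolve_right fun hneg => ?_
  have := hΔ.rootReflection_mem_posRoots hΦ hγ hneg (by rwa [ne_eq, neg_eq_iff_eq_neg])
  rw [map_neg] at this
  exact hΔ.neg_notMem_posRoots hΦ hpos this

/-- Some simple root `γ` in the support of `β` has `⟪γ, β⟫ > 0`, as `⟪β, β⟫ > 0`. -/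
lemma exists_rootReflection_height_lt (hΦ : IsIrredRootSystem Φ) (hΔ : IsBase Φ Δ) {β : V}
    (hβ : β ∈ Φ) (hβΔ : β ∉ Δ) {c : V → ℕ} (hc : β = ∑ a ∈ Δ, (c a : ℝ) • a) :
    ∃ γ ∈ Δ, ∃ d : V → ℕ, rootReflection γ β = ∑ a ∈ Δ, (d a : ℝ) • a ∧
      ∑ a ∈ Δ, d a < ∑ a ∈ Δ, c a := by
  classical
  have hsum : ⟪β, β⟫ = ∑ a ∈ Δ, (c a : ℝ) * ⟪a, β⟫ := by
    nth_rw 1 [hc]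
    simp only [sum_inner, real_inner_smul_left]
  obtain ⟨γ, hγ, hpos⟩ : ∃ γ ∈ Δ, 0 < (c γ : ℝ) * ⟪γ, β⟫ := by
    by_contra! h
    have := hsum ▸ Finset.sum_nonpos h
    exact (real_inner_self_pos.mpr (hΦ.ne_zero hβ)).not_ge this
  have hγβ : 0 < ⟪γ, β⟫ := pos_of_mul_pos_right hpos (c γ).cast_nonneg
  obtain ⟨n, hn⟩ := hΦ.crystallographic γ (hΔ.1 hγ) β hβ
  have hn_pos : (0 : ℝ) < n := by
    rw [← hn]
    exact div_pos (by positivity) (real_inner_self_pos.mpr (hΦ.ne_zero (hΔ.1 hγ)))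
  have hne : β ≠ γ := fun h => hβΔ (h ▸ hγ)
  obtain ⟨-, d, hd⟩ := hΔ.rootReflection_mem_posRoots hΦ hγ ⟨hβ, c, hc⟩ hne
  refine ⟨γ, hγ, d, hd, ?_⟩
  have hcoeff := hΔ.coeff_eq_of_sum_smul_sub_eq hγ (c := fun a => c a) (d := fun a => d a)
    (n := n) (by rw [← hc, ← hd, rootReflection_apply, hn])
  have : (∑ a ∈ Δ, d a : ℝ) = ∑ a ∈ Δ, c a - n := by
    simp only [Nat.cast_sum, Finset.sum_congr rfl hcoeff, Finset.sum_sub_distrib,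
      Finset.sum_ite_eq', if_pos hγ]
  exact_mod_cast (show (∑ a ∈ Δ, d a : ℝ) < ∑ a ∈ Δ, c a by linarith)

lemma rootReflection_mem_closure_of_mem_posRoots (hΦ : IsIrredRootSystem Φ)
    (hΔ : IsBase Φ Δ) {β : V} (hβ : β ∈ posRoots Φ Δ) :
    rootReflection β ∈ Subgroup.closure (simpleReflections Δ) := by
  obtain ⟨hβΦ, c, hc⟩ := hβ
  induction hn : ∑ a ∈ Δ, c a using Nat.strong_induction_on generalizing β c with
  | _ n ih =>
  have hsimple {γ : V} (hγ : γ ∈ Δ) : rootReflection γ ∈ Subgroup.closure (simpleReflections Δ) :=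
    Subgroup.subset_closure (simpleReflections_eq_image Δ ▸ ⟨γ, hγ, rfl⟩)
  by_cases hβΔ : β ∈ Δ
  · exact hsimple hβΔ
  obtain ⟨γ, hγ, d, hd, hlt⟩ := hΔ.exists_rootReflection_height_lt hΦ hβΦ hβΔ hc
  have hrefl := ih _ (hn ▸ hlt) (hΦ.rootReflection_mem (hΔ.1 hγ) hβΦ) d hd rfl
  have hconj : rootReflection β =
      rootReflection γ * rootReflection (rootReflection γ β) * rootReflection γ := by
    simp only [rootReflection_rootReflection_eq_conj, ← mul_assoc, rootReflection_mul_self, one_mul]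
    simp only [mul_assoc, rootReflection_mul_self, mul_one]
  rw [hconj]
  exact mul_mem (mul_mem (hsimple hγ) hrefl) (hsimple hγ)

lemma weylGroup_le_closure_simpleReflections (hΦ : IsIrredRootSystem Φ) (hΔ : IsBase Φ Δ) :
    weylGroup Φ ≤ Subgroup.closure (simpleReflections Δ) := by
  refine (Subgroup.closure_le _).mpr ?_
  rw [reflections_eq_image]
  rintro _ ⟨β, hβ, rfl⟩
  rcases hΔ.mem_posRoots_or_neg_mem hΦ hβ with hpos | hneg
  · exact hΔ.rootReflection_mem_closure_of_mem_posRoots hΦ hpos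
  · exact rootReflection_neg β ▸ hΔ.rootReflection_mem_closure_of_mem_posRoots hΦ hneg

end IsBase

lemma exists_list_length_eq_len {Δ : Finset V} {x : V ≃ₗ[ℝ] V}
    (hx : x ∈ Subgroup.closure (simpleReflections Δ)) :
    ∃ L : List (V ≃ₗ[ℝ] V), (∀ s ∈ L, s ∈ simpleReflections Δ) ∧ L.length = len Δ x ∧
      L.prod = x := by
  rw [← Subgroup.mem_toSubmonoid, Subgroup.closure_toSubmonoid, simpleReflections_inv,
    Set.union_self] at hx
  obtain ⟨L, hL, hprod⟩ := Submonoid.exists_list_of_mem_closure hx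
  have hmem : len Δ x ∈ {n | ∃ L : List (V ≃ₗ[ℝ] V),
      (∀ s ∈ L, s ∈ simpleReflections Δ) ∧ L.length = n ∧ L.prod = x} :=
    Nat.sInf_mem ⟨L.length, L, hL, rfl, hprod⟩
  exact hmem

open Classical in
/-- The level `L`, with `ht^∨ = f ∘ coroot`. -/
noncomputable def level (Φ : Set V) (Δ : Finset V) (f : V →ₗ[ℝ] ℝ) (t v : V) : ℝ :=
  f (coroot t) - f (coroot v) - if v ∈ posRoots Φ Δ then 0 else 1

lemma eq_level {Φ : Set V} {Δ : Finset V} {f : V →ₗ[ℝ] ℝ} {t v : V} {L : ℝ}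
    (hpos : v ∈ posRoots Φ Δ → L = f (coroot t) - f (coroot v))
    (hneg : v ∉ posRoots Φ Δ → L = f (coroot t) - f (coroot v) - 1) :
    L = level Φ Δ f t v := by
  unfold level
  split_ifs with h
  · rw [hpos h, sub_zero]
  · exact hneg h

section level

variable {Φ : Set V} {Δ : Finset V} {r : ℝ} {f : V →ₗ[ℝ] ℝ}

lemma abs_level_rootReflection_sub_le (hΦ : IsIrredRootSystem Φ) (hΔ : IsBase Φ Δ)
    (hr : IsGreatest {x : ℝ | ∃ α ∈ Φ, x = ⟪α, α⟫} r) (hf : ∀ a ∈ Δ, f (coroot a) = 1) (t : V)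
    {γ β : V} (hγ : γ ∈ Δ) (hβ : β ∈ Φ) (hβr : ⟪β, β⟫ = r) :
    |level Φ Δ f t (rootReflection γ β) - level Φ Δ f t β| ≤ 1 := by
  have hheight : f (coroot (rootReflection γ β)) = f (coroot β) - ⟪γ, coroot β⟫ := by
    rw [coroot_rootReflection, rootReflection_apply_eq_sub_inner_smul_coroot, map_sub, map_smul,
      hf γ hγ, smul_eq_mul, mul_one]
  have hγ₀ : γ ≠ 0 := hΦ.ne_zero (hΔ.1 hγ)
  have hγpos := hΔ.mem_posRoots_of_mem hγ
  have hγneg := hΔ.neg_notMem_posRoots hΦ hγpos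
  simp only [level, hheight]
  by_cases h₁ : β = γ
  · subst h₁
    simp only [rootReflection_self, hγpos, hγneg, inner_coroot_self hγ₀, if_true, if_false]
    rw [abs_le]
    constructor <;> linarith
  by_cases h₂ : β = -γ
  · subst h₂
    simp only [map_neg, rootReflection_self, neg_neg, coroot_neg, inner_neg_right,
      inner_coroot_self hγ₀, hγpos, hγneg, if_true, if_false]
    rw [abs_le]
    constructor <;> linarith
  have hiff := hΔ.rootReflection_mem_posRoots_iff hΦ hγ hβ h₁ h₂
  have hcartan := hΦ.abs_inner_coroot_le_one hr (hΔ.1 hγ) hβ hβr (Ne.symm h₁)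
    (fun h => h₂ (by rw [h, neg_neg]))
  by_cases hpos : β ∈ posRoots Φ Δ
  · rw [if_pos hpos, if_pos (hiff.mpr hpos)]
    convert hcartan using 2
    ring
  · rw [if_neg hpos, if_neg (mt hiff.mp hpos)]
    convert hcartan using 2
    ring

lemma abs_level_list_prod_sub_le (hΦ : IsIrredRootSystem Φ) (hΔ : IsBase Φ Δ)
    (hr : IsGreatest {x : ℝ | ∃ α ∈ Φ, x = ⟪α, α⟫} r) (hf : ∀ a ∈ Δ, f (coroot a) = 1) (t : V)
    {β : V} (hβ : β ∈ Φ) (hβr : ⟪β, β⟫ = r) {L : List (V ≃ₗ[ℝ] V)}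
    (hL : ∀ s ∈ L, s ∈ simpleReflections Δ) :
    L.prod β ∈ Φ ∧ ⟪L.prod β, L.prod β⟫ = r ∧
      |level Φ Δ f t (L.prod β) - level Φ Δ f t β| ≤ L.length := by
  induction L with
  | nil => exact ⟨hβ, hβr, by simp⟩
  | cons s L ih =>
    obtain ⟨hmem, hlong, hbound⟩ := ih fun s hs => hL s (List.mem_cons_of_mem _ hs)
    obtain ⟨γ, hγ, rfl⟩ := simpleReflections_eq_image Δ ▸ hL s List.mem_cons_self
    rw [List.prod_cons, LinearEquiv.mul_apply, List.length_cons, Nat.cast_succ]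
    refine ⟨hΦ.rootReflection_mem (hΔ.1 hγ) hmem,
      by rw [inner_rootReflection_rootReflection, hlong], ?_⟩
    calc _ ≤ |level Φ Δ f t (rootReflection γ (L.prod β)) - level Φ Δ f t (L.prod β)| +
          |level Φ Δ f t (L.prod β) - level Φ Δ f t β| := abs_sub_le _ _ _
      _ ≤ L.length + 1 := by
          linarith [abs_level_rootReflection_sub_le hΦ hΔ hr hf t hγ hmem hlong]

end level

theorem level_diff_le_len_general (Φ : Set V) (hΦ : IsIrredRootSystem Φ)
    (Δ : Finset V) (hΔ : IsBase Φ Δ)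
    (r : ℝ) (hr : IsGreatest {x : ℝ | ∃ α ∈ Φ, x = ⟪α, α⟫} r)
    (t : V)
    (f : V →ₗ[ℝ] ℝ) (hf : ∀ a ∈ Δ, f (coroot a) = 1)
    (α β : V) (hβ : β ∈ Φ) (hβlg : ⟪β, β⟫ = r)
    (Lα Lβ : ℝ)
    (hLαpos : α ∈ posRoots Φ Δ → Lα = f (coroot t) - f (coroot α))
    (hLαneg : α ∉ posRoots Φ Δ → Lα = f (coroot t) - f (coroot α) - 1)
    (hLβpos : β ∈ posRoots Φ Δ → Lβ = f (coroot t) - f (coroot β))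
    (hLβneg : β ∉ posRoots Φ Δ → Lβ = f (coroot t) - f (coroot β) - 1)
    (x : V ≃ₗ[ℝ] V) (hx : x ∈ weylGroup Φ) (hxβ : x β = α) :
    |Lα - Lβ| ≤ (len Δ x : ℝ) := by
  obtain ⟨L, hL, hlen, rfl⟩ :=
    exists_list_length_eq_len (hΔ.weylGroup_le_closure_simpleReflections hΦ hx)
  rw [eq_level hLαpos hLαneg, eq_level hLβpos hLβneg, ← hxβ, ← hlen]
  exact (abs_level_list_prod_sub_le hΦ hΔ hr hf t hβ hβlg hL).2.2

/-- Define the level of a long root `α` by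
`L(α) = ht^∨(α̃) − ht^∨(α)` if `α > 0` and `L(α) = ht^∨(α̃) − ht^∨(α) − 1` if `α < 0`
(`ht^∨ = f ∘ coroot`, `f` being the linear functional with value `1` on each simple
coroot). If `x ∈ W` satisfies `x(β) = α` for long roots `α, β`, then
`l(x) ≥ |L(α) − L(β)|`. -/
theorem level_diff_le_len (Φ : Set V) (hΦ : IsIrredRootSystem Φ)
    (Δ : Finset V) (hΔ : IsBase Φ Δ)
    (r : ℝ) (hr : IsGreatest {x : ℝ | ∃ α ∈ Φ, x = ⟪α, α⟫} r)
    (t : V) (ht : IsHighestRoot Φ Δ t)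
    (f : V →ₗ[ℝ] ℝ) (hf : ∀ a ∈ Δ, f (coroot a) = 1)
    (α β : V) (hα : α ∈ Φ) (hαlg : ⟪α, α⟫ = r) (hβ : β ∈ Φ) (hβlg : ⟪β, β⟫ = r)
    (Lα Lβ : ℝ)
    (hLαpos : α ∈ posRoots Φ Δ → Lα = f (coroot t) - f (coroot α))
    (hLαneg : α ∉ posRoots Φ Δ → Lα = f (coroot t) - f (coroot α) - 1)
    (hLβpos : β ∈ posRoots Φ Δ → Lβ = f (coroot t) - f (coroot β))
    (hLβneg : β ∉ posRoots Φ Δ → Lβ = f (coroot t) - f (coroot β) - 1)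
    (x : V ≃ₗ[ℝ] V) (hx : x ∈ weylGroup Φ) (hxβ : x β = α) :
    |Lα - Lβ| ≤ (len Δ x : ℝ) :=
  level_diff_le_len_general Φ hΦ Δ hΔ r hr t f hf α β hβ hβlg Lα Lβ hLαpos hLαneg hLβpos hLβneg x hx
    hxβ
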